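/- arXiv:2605.15545 — 2 statements merged into one kernel-verified Lean document; each statement's English description precedes it below -/
import Mathlib

section
/- Let d = 1 and p > 1. Define D(x) = c_p |x|^{−p}e^{−|x|} for x ∈ ℤ with x ≠ 0 and D(0) = 0, where c_p = (∑_{x≠0} |x|^{−p}e^{−|x|})⁻¹ makes D a probability distribution on ℤ. For z ∈ (0,1), let S_z(x) = ∑_{n=0}^∞ (zD)^{*n}(x). Then there exists z₀ > 0 such that for all z ∈ (0, z₀) and all x ∈ ℤ with x ≠ 0: zD(x) ≤ S_z(x) ≤ 2zD(x). -/
open scoped BigOperators ENNReal Real Topology Pointwise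
open MeasureTheory Matrix Filter

noncomputable section

namespace OZpaper

variable {d : ℕ}

/-- Dot product of a real vector with a lattice point. -/
def rdotZ (μ : Fin d → ℝ) (x : Fin d → ℤ) : ℝ := ∑ i, μ i * (x i : ℝ)

/-- Dot product of two real vectors. -/
def rdot (μ x : Fin d → ℝ) : ℝ := ∑ i, μ i * x i

/-- Euclidean norm of a lattice point. -/
def enormZ (x : Fin d → ℤ) : ℝ := Real.sqrt (∑ i, ((x i : ℝ)) ^ 2)

/-- Euclidean norm of a real vector. -/
def enormR (x : Fin d → ℝ) : ℝ := Real.sqrt (∑ i, (x i) ^ 2)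

/-- ℓ¹ norm of a real vector. -/
def l1R (x : Fin d → ℝ) : ℝ := ∑ i, |x i|

/-- ℓ∞ norm of a real vector. -/
def linftyR (x : Fin d → ℝ) : ℝ := ⨆ i, |x i|

/-- The vector `t • e₁`. -/
def e1R (d : ℕ) (t : ℝ) : Fin d → ℝ := fun i => if (i : ℕ) = 0 then t else 0

/-- The lattice point `n • e₁`. -/
def e1Z (d : ℕ) (n : ℤ) : Fin d → ℤ := fun i => if (i : ℕ) = 0 then n else 0

/-- Cast of a lattice point to a real vector. -/
def toR (x : Fin d → ℤ) : Fin d → ℝ := fun i => (x i : ℝ)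

/-- ℤ^d-symmetry: invariance under coordinate permutations and sign flips. -/
def ZdSymmetric (f : (Fin d → ℤ) → ℝ) : Prop :=
  (∀ (σ : Equiv.Perm (Fin d)) (x : Fin d → ℤ), f (fun i => x (σ i)) = f x) ∧
  (∀ (ε : Fin d → Bool) (x : Fin d → ℤ), f (fun i => if ε i then -(x i) else x i) = f x)

/-- Tilted susceptibility `χ^{(μ)}`, valued in `ℝ≥0∞`. -/
def chi (S : (Fin d → ℤ) → ℝ) (μ : Fin d → ℝ) : ℝ≥0∞ :=
  ∑' x, ENNReal.ofReal (S x * Real.exp (rdotZ μ x))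

/-- The set `Ω = {μ : χ^{(μ)} < ∞}`. -/
def Omega (S : (Fin d → ℤ) → ℝ) : Set (Fin d → ℝ) := {μ | chi S μ < ⊤}

/-- The mass `m_S`. -/
def mass (S : (Fin d → ℤ) → ℝ) : ℝ := sSup {t : ℝ | 0 ≤ t ∧ chi S (e1R d t) < ⊤}

/-- Assumption Ω. -/
structure AssumptionOmega (S : (Fin d → ℤ) → ℝ) : Prop where
  nonneg : ∀ x, 0 ≤ S x
  symm : ZdSymmetric S
  open_Omega : IsOpen (Omega S)
  zero_mem : (0 : Fin d → ℝ) ∈ Omega S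
  exists_not_mem : ∃ μ₁ : ℝ, 0 < μ₁ ∧ e1R d μ₁ ∉ Omega S

/-- Fourier transform `Q̂(k) = ∑_y Q(y) e^{-i k·y}`. -/
def fourierZ (Q : (Fin d → ℤ) → ℝ) (k : Fin d → ℝ) : ℂ :=
  ∑' y, (Q y : ℂ) * Complex.exp (-Complex.I * (rdotZ k y : ℂ))

/-- ℓ^p norm of a function on ℤ^d, valued in `ℝ≥0∞`. -/
def lpNorm (f : (Fin d → ℤ) → ℝ) (p : ℝ) : ℝ≥0∞ :=
  (∑' y, ENNReal.ofReal (|f y| ^ p)) ^ (1 / p)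

/-- The exponent `p_d`. -/
def pExp (d : ℕ) (ζ : ℝ) : ℝ := if d = 1 then 2 else (d : ℝ) / ((d : ℝ) - 2 + min ζ 2)

/-- The class 𝒬_{M,K,ζ} without the (d-1)-th moment bounds. -/
structure MemQweak (M K ζ : ℝ) (Q g : (Fin d → ℤ) → ℝ) : Prop where
  Q_l1 : lpNorm Q 1 ≤ ENNReal.ofReal M
  Q_moment : lpNorm (fun y => enormZ y ^ (2 + ζ) * Q y) 1 ≤ ENNReal.ofReal M
  infrared : ∀ k : Fin d → ℝ, (∀ i, |k i| ≤ π) →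
    K * enormR k ^ 2 ≤ (fourierZ Q 0 - fourierZ Q k).re
  g_l1 : lpNorm g 1 ≤ ENNReal.ofReal M
  g_zeta : lpNorm (fun y => enormZ y ^ ζ * g y) 1 ≤ ENNReal.ofReal M
  g_two : lpNorm (fun y => enormZ y ^ (2 : ℝ) * g y) (min (pExp d ζ) 2) ≤ ENNReal.ofReal M

/-- The class 𝒬_{M,K,ζ}. -/
structure MemQ (M K ζ : ℝ) (Q g : (Fin d → ℤ) → ℝ) : Prop where
  Q_l1 : lpNorm Q 1 ≤ ENNReal.ofReal M
  Q_moment : lpNorm (fun y => enormZ y ^ (2 + ζ) * Q y) 1 ≤ ENNReal.ofReal M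
  infrared : ∀ k : Fin d → ℝ, (∀ i, |k i| ≤ π) →
    K * enormR k ^ 2 ≤ (fourierZ Q 0 - fourierZ Q k).re
  g_l1 : lpNorm g 1 ≤ ENNReal.ofReal M
  g_zeta : lpNorm (fun y => enormZ y ^ ζ * g y) 1 ≤ ENNReal.ofReal M
  g_two : lpNorm (fun y => enormZ y ^ (2 : ℝ) * g y) (min (pExp d ζ) 2) ≤ ENNReal.ofReal M
  Q_dm1 : 4 ≤ d →
    lpNorm (fun y => enormZ y ^ ((d : ℝ) - 1) * Q y) (min ((d : ℝ) / 3) 2) ≤ ENNReal.ofReal M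
  g_dm1 : 4 ≤ d →
    lpNorm (fun y => enormZ y ^ ((d : ℝ) - 1) * g y) 2 ≤ ENNReal.ofReal M

/-- Convolution on ℤ^d. -/
def conv (f g : (Fin d → ℤ) → ℝ) (x : Fin d → ℤ) : ℝ := ∑' y, f (x - y) * g y

/-- Exponential tilt `f^{(μ)}`. -/
def tilt (f : (Fin d → ℤ) → ℝ) (μ : Fin d → ℝ) : (Fin d → ℤ) → ℝ :=
  fun x => f x * Real.exp (rdotZ μ x)

/-- `∑_y f(y) e^{μ·y}`, i.e. `f̂^{(μ)}(0)`. -/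
def tiltSum (f : (Fin d → ℤ) → ℝ) (μ : Fin d → ℝ) : ℝ := ∑' y, f y * Real.exp (rdotZ μ y)

/-- Assumption J. -/
structure AssumptionJ (S J h : (Fin d → ℤ) → ℝ) (M K ζ : ℝ) : Prop where
  M_pos : 0 < M
  K_pos : 0 < K
  zeta_pos : 0 < ζ
  J_symm : ZdSymmetric J
  h_symm : ZdSymmetric h
  J_summable : Summable fun x => |J x|
  h_summable : Summable fun x => |h x|
  OZ_eq : ∀ x, S x = h x + conv J S x
  memQ : ∀ μ ∈ closure (Omega S), MemQ M K ζ (tilt J μ) (tilt h μ)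
  hhat_pos : ∀ μ ∈ closure (Omega S), 0 < tiltSum h μ

/-- Assumption J, without the (d-1)-th moment bounds of the class 𝒬. -/
structure AssumptionJweak (S J h : (Fin d → ℤ) → ℝ) (M K ζ : ℝ) : Prop where
  M_pos : 0 < M
  K_pos : 0 < K
  zeta_pos : 0 < ζ
  J_symm : ZdSymmetric J
  h_symm : ZdSymmetric h
  J_summable : Summable fun x => |J x|
  h_summable : Summable fun x => |h x|
  OZ_eq : ∀ x, S x = h x + conv J S x
  memQ : ∀ μ ∈ closure (Omega S), MemQweak M K ζ (tilt J μ) (tilt h μ)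
  hhat_pos : ∀ μ ∈ closure (Omega S), 0 < tiltSum h μ

/-- `μ` is the optimal tilt `μ_x̂` for direction `x`. -/
def IsOptTilt (S : (Fin d → ℤ) → ℝ) (x μ : Fin d → ℝ) : Prop :=
  μ ∈ frontier (Omega S) ∧ ∀ ν ∈ closure (Omega S), rdot ν x ≤ rdot μ x

/-- The norm `|x|_S = (max_{μ ∈ Ω̄} μ·x)/m_S`. -/
def normS (S : (Fin d → ℤ) → ℝ) (x : Fin d → ℝ) : ℝ :=
  sSup ((fun μ => rdot μ x) '' closure (Omega S)) / mass S

/-- The drift vector `η` of the tilted kernel. -/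
def etaOf (J : (Fin d → ℤ) → ℝ) (μ : Fin d → ℝ) : Fin d → ℝ :=
  fun j => ∑' y, (y j : ℝ) * J y * Real.exp (rdotZ μ y)

/-- The covariance matrix `Λ` of the tilted kernel. -/
def LambdaOf (J : (Fin d → ℤ) → ℝ) (μ : Fin d → ℝ) : Matrix (Fin d) (Fin d) ℝ :=
  Matrix.of fun j l => ∑' y, (y j : ℝ) * (y l : ℝ) * J y * Real.exp (rdotZ μ y)

/-- The Brownian heat kernel `ρ_t(x; η, Λ)`. -/
def heatKer (d : ℕ) (t : ℝ) (x η : Fin d → ℝ) (Λ : Matrix (Fin d) (Fin d) ℝ) : ℝ :=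
  (1 / Real.sqrt Λ.det) * (1 / (2 * π * t) ^ ((d : ℝ) / 2)) *
    Real.exp (-(1 / (2 * t)) * rdot (x - t • η) (Λ⁻¹ *ᵥ (x - t • η)))

/-- The Brownian Green function `𝒞(x; η, Λ)`. -/
def greenC (d : ℕ) (x η : Fin d → ℝ) (Λ : Matrix (Fin d) (Fin d) ℝ) : ℝ :=
  ∫ t in Set.Ioi (0 : ℝ), heatKer d t x η Λ

/-- The massive continuum Green function `𝔾_a(x)`. -/
def massiveG (d : ℕ) (a : ℝ) (x : Fin d → ℝ) : ℝ :=
  ∫ t in Set.Ioi (0 : ℝ),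
    (1 / (2 * π * t) ^ ((d : ℝ) / 2)) * Real.exp (-enormR x ^ 2 / (2 * t)) *
      Real.exp (-(t * a ^ 2) / 2)

/-- The constant `A_φ = ∫_{ℝ^d} ‖y‖₂^φ 𝔾₁(y) dy`. -/
def Aconst (d : ℕ) (φ : ℝ) : ℝ := ∫ y : Fin d → ℝ, enormR y ^ φ * massiveG d 1 y

/-- The torus `[-π, π]^d`. -/
def torus (d : ℕ) : Set (Fin d → ℝ) := Set.univ.pi fun _ => Set.Icc (-π) π

/-- The Fourier integral `I_t(x)`. -/
def It (Q g : (Fin d → ℤ) → ℝ) (t : ℝ) (x : Fin d → ℤ) : ℂ :=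
  (((2 * π) ^ d : ℝ) : ℂ)⁻¹ *
    ∫ k in torus d, Complex.exp (Complex.I * (rdotZ k x : ℂ)) * fourierZ g k *
      Complex.exp (-(t : ℂ) * (fourierZ Q 0 - fourierZ Q k))

/-- The quantity `G_Q(x)`. -/
def GQ (Q g : (Fin d → ℤ) → ℝ) (x : Fin d → ℤ) : ℂ :=
  ∫ t in Set.Ioi (0 : ℝ), It Q g t x

/-- The Kronecker delta at the origin. -/
def deltaZ (d : ℕ) : (Fin d → ℤ) → ℝ := fun x => if x = 0 then 1 else 0

/-- n-fold convolution power. -/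
def convPow (D : (Fin d → ℤ) → ℝ) : ℕ → (Fin d → ℤ) → ℝ
  | 0 => deltaZ d
  | n + 1 => conv D (convPow D n)

/-- Random-walk Green function `S_z(x) = ∑_n z^n D^{*n}(x)`. -/
def rwG (D : (Fin d → ℤ) → ℝ) (z : ℝ) (x : Fin d → ℤ) : ℝ :=
  ∑' n : ℕ, z ^ n * convPow D n x

/-- `σ² = ∑_x ‖x‖₂² J(x)`. -/
def sigmaSq (J : (Fin d → ℤ) → ℝ) : ℝ := ∑' x, enormZ x ^ 2 * J x

/-- Susceptibility `χ = ∑_x S(x)`. -/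
def suscept (S : (Fin d → ℤ) → ℝ) : ℝ := ∑' x, S x

/-- `ĥ(0) = ∑_x h(x)`. -/
def h0 (h : (Fin d → ℤ) → ℝ) : ℝ := ∑' x, h x

/-- Correlation length of order φ. -/
def xiPhi (S : (Fin d → ℤ) → ℝ) (φ : ℝ) : ℝ :=
  ((∑' x, enormZ x ^ φ * S x) / suscept S) ^ (1 / φ)

/-- A critical family of OZ systems. -/
structure CriticalFamily (d : ℕ) (δ zc M K ζ : ℝ) (S J h : ℝ → (Fin d → ℤ) → ℝ) : Prop where
  δ_pos : 0 < δ
  assumOmega : ∀ z ∈ Set.Ico (zc - δ) zc, AssumptionOmega (S z)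
  assumJ : ∀ z ∈ Set.Ico (zc - δ) zc, AssumptionJ (S z) (J z) (h z) M K ζ
  mass_tendsto : Tendsto (fun z => mass (S z)) (𝓝[<] zc) (𝓝 0)

/-- Convolution on ℤ. -/
def convZ (f g : ℤ → ℝ) (x : ℤ) : ℝ := ∑' y, f (x - y) * g y

/-- n-fold convolution power on ℤ. -/
def convZPow (f : ℤ → ℝ) : ℕ → ℤ → ℝ
  | 0 => fun x => if x = 0 then 1 else 0
  | n + 1 => convZ f (convZPow f n)

def gg (p : ℝ) (y : ℤ) : ℝ := |(y:ℝ)| ^ (-p)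
def ff (p : ℝ) (y : ℤ) : ℝ := if y = 0 then 0 else |(y:ℝ)| ^ (-p) * Real.exp (-|(y:ℝ)|)

lemma gg_nonneg (p : ℝ) (y : ℤ) : 0 ≤ gg p y := Real.rpow_nonneg (abs_nonneg _) _

lemma one_le_abs_cast {y : ℤ} (hy : y ≠ 0) : (1:ℝ) ≤ |(y:ℝ)| := by
  have h := Int.one_le_abs hy
  calc (1:ℝ) ≤ ((|y| : ℤ) : ℝ) := by exact_mod_cast h
  _ = |(y:ℝ)| := by push_cast; ring

lemma gg_le_one (p : ℝ) (hp : 0 < p) {y : ℤ} (hy : y ≠ 0) : gg p y ≤ 1 := by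
  have h1 : (1:ℝ) ≤ |(y:ℝ)| := one_le_abs_cast hy
  have := Real.rpow_le_rpow_of_nonpos one_pos h1 (neg_nonpos.mpr hp.le)
  simpa [gg, Real.one_rpow] using this

lemma ff_nonneg (p : ℝ) (y : ℤ) : 0 ≤ ff p y := by
  unfold ff; split
  · exact le_rfl
  · positivity

lemma ff_le_gg (p : ℝ) (y : ℤ) : ff p y ≤ gg p y := by
  unfold ff gg; split
  · positivity
  · nlinarith [Real.exp_le_one_iff.mpr (neg_nonpos.mpr (abs_nonneg ((y:ℤ):ℝ))),
      Real.exp_pos (-|(y:ℝ)|), Real.rpow_nonneg (abs_nonneg ((y:ℝ))) (-p)]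

lemma ff_le_one (p : ℝ) (hp : 0 < p) (y : ℤ) : ff p y ≤ 1 := by
  by_cases hy : y = 0
  · simp [ff, hy]
  · exact (ff_le_gg p y).trans (gg_le_one p hp hy)

lemma gg_summable (p : ℝ) (hp : 1 < p) : Summable (gg p) := Real.summable_abs_int_rpow hp

lemma ff_summable (p : ℝ) (hp : 1 < p) : Summable (ff p) :=
  (gg_summable p hp).of_nonneg_of_le (ff_nonneg p) (ff_le_gg p)

lemma half_rpow (p a : ℝ) (ha : 0 ≤ a) : (a/2) ^ (-p) = 2^p * a^(-p) := by
  rw [Real.div_rpow ha (by norm_num : (0:ℝ) ≤ 2), Real.rpow_neg (by norm_num : (0:ℝ) ≤ 2),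
    ]
  field_simp

lemma key (p : ℝ) (hp : 1 < p) (x y : ℤ) (hx : x ≠ 0) :
    ff p (x - y) * ff p y ≤ 2^p * ff p x * (gg p y + gg p (x - y)) := by
  have h2p : (0:ℝ) < 2^p := Real.rpow_pos_of_pos two_pos p
  have hRHS0 : 0 ≤ 2^p * ff p x * (gg p y + gg p (x - y)) := by
    have := ff_nonneg p x; have := gg_nonneg p y; have := gg_nonneg p (x - y); positivity
  by_cases hy : y = 0
  · simpa [ff, hy] using hRHS0
  by_cases hxy : x - y = 0
  · simpa [ff, hxy] using hRHS0
  set a := |(x:ℝ)| with ha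
  set b := |((x - y : ℤ):ℝ)| with hb
  set c := |(y:ℝ)| with hc
  have ha0 : (1:ℝ) ≤ a := one_le_abs_cast hx
  have hb0 : (1:ℝ) ≤ b := one_le_abs_cast hxy
  have hc0 : (1:ℝ) ≤ c := one_le_abs_cast hy
  have habc : a ≤ b + c := by
    have : (x:ℝ) = ((x - y : ℤ):ℝ) + (y:ℝ) := by push_cast; ring
    calc a = |((x - y : ℤ):ℝ) + (y:ℝ)| := by rw [ha, this]
    _ ≤ b + c := abs_add_le _ _
  have hexp : Real.exp (-b) * Real.exp (-c) ≤ Real.exp (-a) := by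
    rw [← Real.exp_add]
    exact Real.exp_le_exp.mpr (by linarith)
  have hffx : ff p x = a ^ (-p) * Real.exp (-a) := by simp [ff, hx, ha]
  have hmain : ∀ u v : ℝ, 1 ≤ u → 1 ≤ v → a ≤ 2 * u → a ≤ u + v →
      (u ^ (-p) * Real.exp (-u)) * (v ^ (-p) * Real.exp (-v)) ≤
        2^p * ff p x * v ^ (-p) := by
    intro u v hu hv hau hauv
    have hu' : a / 2 ≤ u := by linarith
    have hupow : u ^ (-p) ≤ 2^p * a^(-p) := by
      rw [← half_rpow p a (by linarith)]
      exact Real.rpow_le_rpow_of_nonpos (by linarith) hu' (by linarith)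
    have hexp2 : Real.exp (-u) * Real.exp (-v) ≤ Real.exp (-a) := by
      rw [← Real.exp_add]
      exact Real.exp_le_exp.mpr (by linarith)
    calc (u ^ (-p) * Real.exp (-u)) * (v ^ (-p) * Real.exp (-v))
        = (u ^ (-p) * v ^ (-p)) * (Real.exp (-u) * Real.exp (-v)) := by ring
      _ ≤ (2^p * a^(-p) * v ^ (-p)) * Real.exp (-a) := by
          apply mul_le_mul
          · apply mul_le_mul hupow le_rfl (Real.rpow_nonneg (by linarith) _) (by positivity)
          · exact hexp2
          · positivity
          · positivity
      _ = 2^p * (a ^ (-p) * Real.exp (-a)) * v ^ (-p) := by ring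
      _ = 2^p * ff p x * v ^ (-p) := by rw [hffx]
  have hLHS : ff p (x - y) * ff p y = (b ^ (-p) * Real.exp (-b)) * (c ^ (-p) * Real.exp (-c)) := by
    simp only [ff, if_neg hxy, if_neg hy, hb, hc]
  have hggy : gg p y = c ^ (-p) := rfl
  have hggxy : gg p (x - y) = b ^ (-p) := rfl
  have hffx0 : 0 ≤ 2^p * ff p x := by have := ff_nonneg p x; positivity
  by_cases hcase : a ≤ 2 * b
  · have h1 := hmain b c hb0 hc0 hcase habc
    have h2 : 0 ≤ gg p (x - y) := gg_nonneg p (x - y)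
    rw [hLHS]
    calc (b ^ (-p) * Real.exp (-b)) * (c ^ (-p) * Real.exp (-c)) ≤ 2^p * ff p x * c ^ (-p) := h1
    _ = 2^p * ff p x * gg p y := by rw [hggy]
    _ ≤ 2^p * ff p x * (gg p y + gg p (x - y)) := by nlinarith [gg_nonneg p y]
  · have hcase2 : a ≤ 2 * c := by linarith
    have h1 := hmain c b hc0 hb0 hcase2 (by linarith)
    rw [hLHS]
    calc (b ^ (-p) * Real.exp (-b)) * (c ^ (-p) * Real.exp (-c))
        = (c ^ (-p) * Real.exp (-c)) * (b ^ (-p) * Real.exp (-b)) := by ring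
    _ ≤ 2^p * ff p x * b ^ (-p) := h1
    _ = 2^p * ff p x * gg p (x - y) := by rw [hggxy]
    _ ≤ 2^p * ff p x * (gg p y + gg p (x - y)) := by nlinarith [gg_nonneg p y, gg_nonneg p (x - y)]


lemma gg_shift_summable (p : ℝ) (hp : 1 < p) (x : ℤ) : Summable fun y => gg p (x - y) :=
  (Equiv.subLeft x).summable_iff.mpr (gg_summable p hp)

lemma gg_shift_tsum (p : ℝ) (hp : 1 < p) (x : ℤ) : ∑' y, gg p (x - y) = ∑' y, gg p y :=
  (Equiv.subLeft x).tsum_eq (gg p)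

lemma key_summable (p : ℝ) (hp : 1 < p) (x : ℤ) (hx : x ≠ 0) :
    Summable fun y => ff p (x - y) * ff p y := by
  apply Summable.of_nonneg_of_le (fun y => mul_nonneg (ff_nonneg p _) (ff_nonneg p _))
    (fun y => key p hp x y hx)
  exact (((gg_summable p hp).add (gg_shift_summable p hp x)).mul_left _)

lemma key_tsum (p : ℝ) (hp : 1 < p) (x : ℤ) (hx : x ≠ 0) :
    ∑' y, ff p (x - y) * ff p y ≤ (2^p * (2 * ∑' y, gg p y)) * ff p x := by
  have h1 : ∑' y, ff p (x - y) * ff p y ≤ ∑' y, 2^p * ff p x * (gg p y + gg p (x - y)) := by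
    apply Summable.tsum_le_tsum (fun y => key p hp x y hx) (key_summable p hp x hx)
    exact (((gg_summable p hp).add (gg_shift_summable p hp x)).mul_left _)
  have h2 : ∑' y, 2^p * ff p x * (gg p y + gg p (x - y))
      = 2^p * ff p x * (∑' y, gg p y + ∑' y, gg p (x - y)) := by
    rw [tsum_mul_left, Summable.tsum_add (gg_summable p hp) (gg_shift_summable p hp x)]
  rw [h2, gg_shift_tsum p hp x] at h1
  calc ∑' y, ff p (x - y) * ff p y ≤ 2^p * ff p x * (∑' y, gg p y + ∑' y, gg p y) := h1
  _ = (2^p * (2 * ∑' y, gg p y)) * ff p x := by ring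

/-- delta at origin -/
def dd : ℤ → ℝ := fun y => if y = 0 then 1 else 0

lemma dd_nonneg (y : ℤ) : 0 ≤ dd y := by unfold dd; split <;> norm_num

lemma dd_summable : Summable dd := by
  apply summable_of_ne_finset_zero (s := {(0:ℤ)}); intro y hy; simp at hy; simp [dd, hy]

lemma dd_tsum : ∑' y, dd y = 1 := tsum_ite_eq 0 1



lemma convZPow_zero_eq_dd (f : ℤ → ℝ) : convZPow f 0 = dd := rfl

lemma conv_dd (G : ℤ → ℝ) (x : ℤ) : convZ G dd x = G x := by
  unfold convZ
  have h : ∀ y : ℤ, G (x - y) * dd y = if y = 0 then G x else 0 := by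
    intro y
    by_cases hy : y = 0 <;> simp [dd, hy]
  rw [tsum_congr h, tsum_ite_eq]

lemma convZPow_one (f : ℤ → ℝ) (x : ℤ) : convZPow f 1 x = f x := by
  show convZ f (convZPow f 0) x = f x
  rw [convZPow_zero_eq_dd, conv_dd]

lemma master (E F : ℤ → ℝ) (hE0 : ∀ y, 0 ≤ E y) (hEF : ∀ y, E y ≤ F y)
    (hFsum : Summable F) (C₀ : ℝ) (hC : ∀ y, F y ≤ C₀) (β : ℝ) (hβ0 : 0 ≤ β)
    (hconv : ∀ x, convZ F F x ≤ β * F x) :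
    ∀ n : ℕ, (∀ x, 0 ≤ convZPow E n x) ∧ (∀ x, convZPow E n x ≤ convZPow F n x) ∧
      (∀ x, 0 ≤ convZPow F n x) ∧
      (∀ x, Summable fun y => F (x - y) * convZPow F n y) ∧
      (∀ x, convZPow F (n + 1) x ≤ β ^ n * F x) := by
  have hF0 : ∀ y, 0 ≤ F y := fun y => (hE0 y).trans (hEF y)
  have hFF_sum : ∀ x, Summable fun y => F (x - y) * F y := by
    intro x
    apply Summable.of_nonneg_of_le (fun y => mul_nonneg (hF0 _) (hF0 _))
      (fun y => mul_le_mul_of_nonneg_right (hC _) (hF0 y)) (hFsum.mul_left C₀)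
  intro n
  induction n with
  | zero =>
    refine ⟨fun x => dd_nonneg x, fun x => le_rfl, fun x => dd_nonneg x, ?_, ?_⟩
    · intro x
      have h : ∀ y : ℤ, F (x - y) * convZPow F 0 y = if y = 0 then F x else 0 := by
        intro y; by_cases hy : y = 0 <;> simp [convZPow, hy]
      rw [funext h]
      apply summable_of_ne_finset_zero (s := {(0:ℤ)})
      intro y hy; simp at hy; simp [hy]
    · intro x
      rw [convZPow_one]
      simp
  | succ n ih =>
    obtain ⟨ihE0, ihEF, ihF0, ihsum, ihbd⟩ := ih
    have hF0succ : ∀ x, 0 ≤ convZPow F (n + 1) x := by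
      intro x
      exact tsum_nonneg fun y => mul_nonneg (hF0 _) (ihF0 _)
    have hsum_succ : ∀ x, Summable fun y => F (x - y) * convZPow F (n + 1) y := by
      intro x
      apply Summable.of_nonneg_of_le (fun y => mul_nonneg (hF0 _) (hF0succ _))
        (fun y => ?_) (((hFF_sum x).mul_left (β ^ n)))
      calc F (x - y) * convZPow F (n + 1) y ≤ F (x - y) * (β ^ n * F y) :=
            mul_le_mul_of_nonneg_left (ihbd y) (hF0 _)
      _ = β ^ n * (F (x - y) * F y) := by ring
    have hE0succ : ∀ x, 0 ≤ convZPow E (n + 1) x := by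
      intro x
      exact tsum_nonneg fun y => mul_nonneg (hE0 _) (ihE0 _)
    refine ⟨hE0succ, ?_, hF0succ, hsum_succ, ?_⟩
    · intro x
      refine Summable.tsum_le_tsum (fun y => mul_le_mul (hEF _) (ihEF y) (ihE0 y) (hF0 _)) ?_ (ihsum x)
      exact Summable.of_nonneg_of_le (fun y => mul_nonneg (hE0 _) (ihE0 _))
        (fun y => mul_le_mul (hEF _) (ihEF y) (ihE0 y) (hF0 _)) (ihsum x)
    · intro x
      have h1 : convZPow F (n + 2) x ≤ ∑' y, β ^ n * (F (x - y) * F y) := by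
        apply Summable.tsum_le_tsum (fun y => ?_) (hsum_succ x) ((hFF_sum x).mul_left (β ^ n))
        calc F (x - y) * convZPow F (n + 1) y ≤ F (x - y) * (β ^ n * F y) :=
              mul_le_mul_of_nonneg_left (ihbd y) (hF0 _)
        _ = β ^ n * (F (x - y) * F y) := by ring
      rw [tsum_mul_left] at h1
      calc convZPow F (n + 2) x ≤ β ^ n * convZ F F x := h1
      _ ≤ β ^ n * (β * F x) := mul_le_mul_of_nonneg_left (hconv x) (pow_nonneg hβ0 n)
      _ = β ^ (n + 1) * F x := by ring


lemma summable_single (b : ℤ) (c : ℝ) : Summable fun y : ℤ => if y = b then c else 0 := by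
  apply summable_of_ne_finset_zero (s := {b}); intro y hy; simp at hy; simp [hy]

lemma ff_neg (p : ℝ) (y : ℤ) : ff p (-y) = ff p y := by
  unfold ff
  have h : |((-y : ℤ) : ℝ)| = |(y : ℝ)| := by push_cast; exact abs_neg _
  simp [neg_eq_zero, h]

theorem statement16 (p : ℝ) (hp : 1 < p) (cp : ℝ)
    (hcp : cp = (∑' x : ℤ,
      if x = 0 then 0 else |(x : ℝ)| ^ (-p) * Real.exp (-|(x : ℝ)|))⁻¹)
    (D : ℤ → ℝ)
    (hD : D = fun x : ℤ =>
      if x = 0 then 0 else cp * |(x : ℝ)| ^ (-p) * Real.exp (-|(x : ℝ)|)) :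
    ∃ z₀ : ℝ, 0 < z₀ ∧ ∀ z ∈ Set.Ioo (0 : ℝ) z₀, ∀ x : ℤ, x ≠ 0 →
      z * D x ≤ (∑' n : ℕ, convZPow (fun y => z * D y) n x) ∧
      (∑' n : ℕ, convZPow (fun y => z * D y) n x) ≤ 2 * (z * D x) := by
  have hp0 : 0 < p := by linarith
  have hcp' : cp = (∑' x : ℤ, ff p x)⁻¹ := hcp
  have hcp0 : 0 ≤ cp := by
    rw [hcp']
    exact inv_nonneg.mpr (tsum_nonneg (ff_nonneg p))
  have hDf : ∀ y, D y = cp * ff p y := by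
    intro y
    rw [hD]
    by_cases hy : y = 0
    · simp [ff, hy]
    · simp only [ff, if_neg hy]
      ring
  have hD0 : ∀ y, 0 ≤ D y := fun y => (hDf y) ▸ mul_nonneg hcp0 (ff_nonneg p y)
  have hDsum : Summable D := by
    rw [funext hDf]
    exact (ff_summable p hp).mul_left cp
  have hDbd : ∀ y, D y ≤ cp := by
    intro y
    rw [hDf]
    calc cp * ff p y ≤ cp * 1 := mul_le_mul_of_nonneg_left (ff_le_one p hp0 y) hcp0
    _ = cp := mul_one cp
  have hDsymm : ∀ y, D (-y) = D y := by
    intro y; rw [hDf, hDf, ff_neg]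
  have hDzero : D 0 = 0 := by rw [hDf]; simp [ff]
  set A := ∑' y, gg p y with hA
  have hA0 : 0 ≤ A := tsum_nonneg (gg_nonneg p)
  set B1 := cp * (2 ^ p * (2 * A)) with hB1
  have hDD : ∀ x : ℤ, x ≠ 0 → convZ D D x ≤ B1 * D x := by
    intro x hx
    have h1 : convZ D D x = (cp * cp) * ∑' y, ff p (x - y) * ff p y := by
      unfold convZ
      rw [tsum_congr (fun y => by rw [hDf, hDf]; ring :
        ∀ y, D (x - y) * D y = (cp * cp) * (ff p (x - y) * ff p y)), tsum_mul_left]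
    rw [h1]
    calc (cp * cp) * ∑' y, ff p (x - y) * ff p y
        ≤ (cp * cp) * ((2 ^ p * (2 * A)) * ff p x) := by
          apply mul_le_mul_of_nonneg_left (key_tsum p hp x hx) (by positivity)
    _ = B1 * D x := by rw [hDf, hB1]; ring
  set CD := ∑' y, D y with hCD
  have hCD0 : 0 ≤ CD := tsum_nonneg hD0
  have hDD0 : convZ D D 0 ≤ cp * CD := by
    unfold convZ
    have h1 : ∀ y : ℤ, D (0 - y) * D y = D y * D y := by
      intro y; rw [zero_sub, hDsymm]
    rw [tsum_congr h1]
    calc ∑' y, D y * D y ≤ ∑' y, cp * D y := by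
          apply Summable.tsum_le_tsum (fun y => mul_le_mul_of_nonneg_right (hDbd y) (hD0 y)) ?_
            (hDsum.mul_left cp)
          exact Summable.of_nonneg_of_le (fun y => mul_nonneg (hD0 y) (hD0 y))
            (fun y => mul_le_mul_of_nonneg_right (hDbd y) (hD0 y)) (hDsum.mul_left cp)
    _ = cp * CD := tsum_mul_left
  set Dt := fun y => D y + dd y with hDt
  have hDt0 : ∀ y, 0 ≤ Dt y := fun y => add_nonneg (hD0 y) (dd_nonneg y)
  have hDtsum : Summable Dt := hDsum.add dd_summable
  have hDtbd : ∀ y, Dt y ≤ cp + 1 := by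
    intro y
    apply add_le_add (hDbd y)
    unfold dd; split <;> norm_num
  have hexpand : ∀ x, convZ Dt Dt x = convZ D D x + (D x + (D x + dd x)) := by
    intro x
    have hterm : ∀ y, Dt (x - y) * Dt y = D (x - y) * D y +
        ((if y = 0 then D x else 0) + ((if y = x then D x else 0) +
          (if y = 0 then dd x else 0))) := by
      intro y
      have hdd0 : dd 0 = 1 := rfl
      by_cases h0 : y = 0
      · subst h0
        by_cases hx' : x = 0
        · subst hx'
          simp [hDt, dd, hDzero]
        · have h1 : dd x = 0 := by simp [dd, hx']
          have h2 : ¬((0:ℤ) = x) := fun h => hx' h.symm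
          simp [hDt, dd, hDzero, h1, h2, sub_zero]
      · by_cases hx' : y = x
        · subst hx'
          have h2 : dd y = 0 := by simp [dd, h0]
          simp [hDt, sub_self, hDzero, hdd0, h2, h0]
        · have h1 : dd y = 0 := by simp [dd, h0]
          have hxy : x ≠ y := fun h => hx' h.symm
          have h2 : dd (x - y) = 0 := by
            simp [dd, sub_eq_zero, hxy]
          simp [hDt, h1, h2, h0, hx']
    have sDD : Summable fun y => D (x - y) * D y :=
      Summable.of_nonneg_of_le (fun y => mul_nonneg (hD0 _) (hD0 _))
        (fun y => mul_le_mul_of_nonneg_right (hDbd _) (hD0 y)) (hDsum.mul_left cp)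
    show ∑' y, Dt (x - y) * Dt y = _
    rw [tsum_congr hterm,
      Summable.tsum_add sDD ((summable_single 0 (D x)).add ((summable_single x (D x)).add
        (summable_single 0 (dd x)))),
      Summable.tsum_add (summable_single 0 (D x)) ((summable_single x (D x)).add
        (summable_single 0 (dd x))),
      Summable.tsum_add (summable_single x (D x)) (summable_single 0 (dd x)),
      tsum_ite_eq, tsum_ite_eq, tsum_ite_eq]
    rfl
  set B' := max (B1 + 2) (cp * CD + 1) with hB'
  set B'' := max B' 1 with hB''
  have hB''1 : (1:ℝ) ≤ B'' := le_max_right _ _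
  have hB''0 : (0:ℝ) < B'' := lt_of_lt_of_le one_pos hB''1
  have hB'B'' : B' ≤ B'' := le_max_left _ _
  have hDtconv : ∀ x, convZ Dt Dt x ≤ B'' * Dt x := by
    intro x
    by_cases hx : x = 0
    · subst hx
      rw [hexpand 0]
      have hdd0 : dd 0 = 1 := rfl
      have hDt00 : Dt 0 = 1 := by simp [hDt, hDzero, hdd0]
      rw [hDt00, mul_one, hDzero, hdd0]
      have : convZ D D 0 + (0 + (0 + 1)) ≤ cp * CD + 1 := by linarith [hDD0]
      calc convZ D D 0 + (0 + (0 + 1)) ≤ cp * CD + 1 := this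
      _ ≤ B' := le_max_right _ _
      _ ≤ B'' := hB'B''
    · rw [hexpand x]
      have hddx : dd x = 0 := by simp [dd, hx]
      have hDtx : Dt x = D x := by simp [hDt, hddx]
      rw [hDtx, hddx]
      calc convZ D D x + (D x + (D x + 0)) ≤ B1 * D x + (D x + (D x + 0)) := by
            linarith [hDD x hx]
      _ = (B1 + 2) * D x := by ring
      _ ≤ B'' * D x := by
          apply mul_le_mul_of_nonneg_right _ (hD0 x)
          exact le_trans (le_max_left _ _) hB'B''
  refine ⟨1 / (2 * B''), by positivity, ?_⟩
  rintro z ⟨hz0, hz1⟩ x hx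
  set E := fun y => z * D y with hE
  set F := fun y => z * Dt y with hF
  set β := z * B'' with hβ
  have hβ0 : 0 ≤ β := mul_nonneg hz0.le hB''0.le
  have hβhalf : β < 1 / 2 := by
    rw [hβ]
    rw [lt_div_iff₀ (by positivity : (0:ℝ) < 2 * B'')] at hz1
    nlinarith
  have hβ1 : β < 1 := by linarith
  have hE0 : ∀ y, 0 ≤ E y := fun y => mul_nonneg hz0.le (hD0 y)
  have hEF : ∀ y, E y ≤ F y := fun y =>
    mul_le_mul_of_nonneg_left (le_add_of_nonneg_right (dd_nonneg y)) hz0.le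
  have hFsum : Summable F := hDtsum.mul_left z
  have hFC : ∀ y, F y ≤ z * (cp + 1) := fun y =>
    mul_le_mul_of_nonneg_left (hDtbd y) hz0.le
  have hconvF : ∀ w, convZ F F w ≤ β * F w := by
    intro w
    have h1 : convZ F F w = (z * z) * convZ Dt Dt w := by
      unfold convZ
      rw [tsum_congr (fun y => by rw [hF]; ring :
        ∀ y, F (w - y) * F y = (z * z) * (Dt (w - y) * Dt y)), tsum_mul_left]
    rw [h1]
    calc (z * z) * convZ Dt Dt w ≤ (z * z) * (B'' * Dt w) := by
          apply mul_le_mul_of_nonneg_left (hDtconv w) (by positivity)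
    _ = β * F w := by rw [hβ, hF]; ring
  have h := master E F hE0 hEF hFsum (z * (cp + 1)) hFC β hβ0 hconvF
  have hE0n : ∀ n x, 0 ≤ convZPow E n x := fun n => (h n).1
  have hshift_le : ∀ n, convZPow E (n + 1) x ≤ β ^ n * F x := fun n =>
    ((h (n + 1)).2.1 x).trans ((h n).2.2.2.2 x)
  have hgeo : Summable fun n : ℕ => β ^ n * F x :=
    (summable_geometric_of_lt_one hβ0 hβ1).mul_right (F x)
  have hshift_sum : Summable fun n => convZPow E (n + 1) x :=
    Summable.of_nonneg_of_le (fun n => hE0n (n + 1) x) hshift_le hgeo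
  have hfull : Summable fun n => convZPow E n x := (summable_nat_add_iff 1).mp hshift_sum
  have htsum : ∑' n, convZPow E n x = convZPow E 0 x + ∑' n, convZPow E (n + 1) x :=
    Summable.tsum_eq_zero_add hfull
  have hzero : convZPow E 0 x = 0 := by simp [convZPow, hx]
  have hone : convZPow E 1 x = z * D x := convZPow_one E x
  have hFx : F x = z * D x := by
    have : dd x = 0 := by simp [dd, hx]
    simp [hF, hDt, this]
  constructor
  · rw [htsum, hzero, zero_add]
    have h1 : convZPow E (0 + 1) x ≤ ∑' n, convZPow E (n + 1) x :=
      Summable.le_tsum hshift_sum 0 (fun j _ => hE0n (j + 1) x)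
    rw [zero_add, hone] at h1
    exact h1
  · rw [htsum, hzero, zero_add]
    have h1 : ∑' n, convZPow E (n + 1) x ≤ ∑' n : ℕ, β ^ n * F x :=
      Summable.tsum_le_tsum hshift_le hshift_sum hgeo
    have h2 : ∑' n : ℕ, β ^ n * F x = (1 - β)⁻¹ * F x := by
      rw [tsum_mul_right, tsum_geometric_of_lt_one hβ0 hβ1]
    have h3 : (1 - β)⁻¹ ≤ 2 := by
      rw [inv_eq_one_div]
      have := one_div_le_one_div_of_le (by norm_num : (0:ℝ) < 1/2) (by linarith : 1/2 ≤ 1 - β)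
      simpa using this
    calc ∑' n, convZPow E (n + 1) x ≤ (1 - β)⁻¹ * F x := h2 ▸ h1
    _ ≤ 2 * F x := mul_le_mul_of_nonneg_right h3 (le_trans (hE0 x) (hEF x))
    _ = 2 * (z * D x) := by rw [hFx]

end OZpaper
end
end

section
/- For every dimension d ≥ 1 and every φ ≥ 0, ∫_{ℝ^d} ‖y‖₂^φ 𝔾₁(y) dy = 2^{φ+1} Γ((φ+2)/2) Γ((φ+d)/2)/Γ(d/2), where Γ is the Gamma function. -/
open scoped BigOperators ENNReal Real Topology Pointwise
open MeasureTheory Matrix Filter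

noncomputable section

namespace OZpaper

variable {d : ℕ}

section Statement18Aux
open Real Set


lemma aux_inner (dR : ℝ) {q t : ℝ} (hq : -1 < q) (ht : 0 < t) :
    ∫ r in Set.Ioi (0:ℝ), r ^ q *
        ((1 / (2 * π * t) ^ (dR / 2)) * Real.exp (-r ^ 2 / (2 * t)) * Real.exp (-t / 2)) =
      ((2 * π) ^ (-(dR / 2)) * 2 ^ ((q + 1) / 2) * (1 / 2) * Real.Gamma ((q + 1) / 2)) *
        (t ^ ((q + 1) / 2 - dR / 2) * Real.exp (-t / 2)) := by
  have h2t : (0:ℝ) < 2 * t := by linarith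
  have hb : (0:ℝ) < 1 / (2 * t) := by positivity
  have hstep : ∀ r ∈ Set.Ioi (0:ℝ), r ^ q *
        ((1 / (2 * π * t) ^ (dR / 2)) * Real.exp (-r ^ 2 / (2 * t)) * Real.exp (-t / 2)) =
      ((1 / (2 * π * t) ^ (dR / 2)) * Real.exp (-t / 2)) *
        (r ^ q * Real.exp (-(1 / (2 * t)) * r ^ (2:ℝ))) := by
    intro r hr
    rw [Real.rpow_two]
    ring_nf
  rw [setIntegral_congr_fun measurableSet_Ioi hstep, integral_const_mul,
    integral_rpow_mul_exp_neg_mul_rpow two_pos hq hb]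
  have h1 : (1 / (2 * t)) ^ (-(q + 1) / 2) = 2 ^ ((q + 1) / 2) * t ^ ((q + 1) / 2) := by
    rw [one_div, ← Real.rpow_neg_one, ← Real.rpow_mul h2t.le]
    rw [show (-1 * (-(q + 1) / 2)) = (q+1)/2 by ring, Real.mul_rpow (by norm_num) ht.le]
  have h2 : (1:ℝ) / (2 * π * t) ^ (dR / 2) = (2 * π) ^ (-(dR / 2)) * t ^ (-(dR / 2)) := by
    rw [one_div, show 2 * π * t = (2 * π) * t by ring,
      Real.mul_rpow (by positivity) ht.le, mul_inv,
      ← Real.rpow_neg (by positivity), ← Real.rpow_neg ht.le]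
  rw [h1, h2]
  rw [show t ^ ((q + 1) / 2 - dR / 2) = t ^ (-(dR/2)) * t ^ ((q+1)/2) by
    rw [← Real.rpow_add ht]; ring_nf]
  ring

lemma aux_sec (dR : ℝ) {q t : ℝ} (hq : -1 < q) (ht : 0 < t) :
    IntegrableOn (fun r : ℝ => r ^ q *
        ((1 / (2 * π * t) ^ (dR / 2)) * Real.exp (-r ^ 2 / (2 * t)) * Real.exp (-t / 2)))
      (Ioi 0) := by
  have hb : (0:ℝ) < 1 / (2 * t) := by positivity
  refine IntegrableOn.congr_fun
    (((integrableOn_rpow_mul_exp_neg_mul_rpow hq two_pos hb).const_mul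
      ((1 / (2 * π * t) ^ (dR / 2)) * Real.exp (-t / 2)))) ?_ measurableSet_Ioi
  intro r hr
  simp only [Real.rpow_two]
  ring

lemma aux_touter {s : ℝ} (hs : -1 < s) :
    ∫ t in Ioi (0:ℝ), t ^ s * Real.exp (-t / 2) = 2 ^ (s + 1) * Real.Gamma (s + 1) := by
  have h := integral_rpow_mul_exp_neg_mul_Ioi (a := s + 1) (r := (1:ℝ)/2)
    (by linarith) (by norm_num)
  simp only [add_sub_cancel_right] at h
  rw [show ∫ t in Ioi (0:ℝ), t ^ s * Real.exp (-t / 2)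
      = ∫ t in Ioi (0:ℝ), t ^ s * Real.exp (-(1/2 * t)) by
    refine setIntegral_congr_fun measurableSet_Ioi fun t ht => ?_
    ring_nf, h]
  norm_num

lemma aux_meas (dR q : ℝ) :
    Measurable (fun p : ℝ × ℝ => p.2 ^ q *
      ((1 / (2 * π * p.1) ^ (dR / 2)) * Real.exp (-p.2 ^ 2 / (2 * p.1)) * Real.exp (-p.1 / 2))) := by
  fun_prop

lemma aux_integrable (dR : ℝ) {q : ℝ} (hq : -1 < q) (he : -1 < (q + 1) / 2 - dR / 2) :
    Integrable (Function.uncurry fun (t r : ℝ) => r ^ q *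
        ((1 / (2 * π * t) ^ (dR / 2)) * Real.exp (-r ^ 2 / (2 * t)) * Real.exp (-t / 2)))
      ((volume.restrict (Ioi 0)).prod (volume.restrict (Ioi 0))) := by
  set K : ℝ := (2 * π) ^ (-(dR / 2)) * 2 ^ ((q + 1) / 2) * (1 / 2) * Real.Gamma ((q + 1) / 2)
    with hK
  have hmeas : AEStronglyMeasurable (Function.uncurry fun (t r : ℝ) => r ^ q *
        ((1 / (2 * π * t) ^ (dR / 2)) * Real.exp (-r ^ 2 / (2 * t)) * Real.exp (-t / 2)))
      ((volume.restrict (Ioi 0)).prod (volume.restrict (Ioi 0))) :=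
    (aux_meas dR q).aestronglyMeasurable
  rw [integrable_prod_iff hmeas]
  constructor
  · rw [ae_restrict_iff' measurableSet_Ioi]
    exact Filter.Eventually.of_forall fun t ht => aux_sec dR hq ht
  · set e : ℝ := (q + 1) / 2 - dR / 2 with hedef
    have hKpos : 0 < Real.Gamma ((q+1)/2) := Real.Gamma_pos_of_pos (by linarith)
    have hKnn : 0 ≤ K := by positivity
    have hg : IntegrableOn (fun t : ℝ => K * (t ^ e * Real.exp (-t / 2))) (Ioi 0) := by
      refine IntegrableOn.congr_fun
        (((integrableOn_rpow_mul_exp_neg_mul_rpow he one_pos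
          (by norm_num : (0:ℝ) < 1/2)).const_mul K)) ?_ measurableSet_Ioi
      intro t ht
      simp only [Real.rpow_one]
      ring_nf
    refine hg.congr ?_
    rw [Filter.EventuallyEq, ae_restrict_iff' measurableSet_Ioi]
    refine Filter.Eventually.of_forall fun t ht => ?_
    have ht' : (0:ℝ) < t := ht
    have hnn : ∀ r ∈ Ioi (0:ℝ), 0 ≤ r ^ q *
        ((1 / (2 * π * t) ^ (dR / 2)) * Real.exp (-r ^ 2 / (2 * t)) * Real.exp (-t / 2)) := by
      intro r hr
      have hr' : (0:ℝ) < r := hr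
      positivity
    calc K * (t ^ e * Real.exp (-t / 2))
        = ∫ r in Ioi (0:ℝ), r ^ q *
            ((1 / (2 * π * t) ^ (dR / 2)) * Real.exp (-r ^ 2 / (2 * t)) * Real.exp (-t / 2)) :=
          (aux_inner dR hq ht').symm
      _ = _ := by
          refine setIntegral_congr_fun measurableSet_Ioi fun r hr => ?_
          simp only [Function.uncurry_apply_pair]
          rw [Real.norm_of_nonneg (hnn r hr)]

lemma aux_iter (dR : ℝ) {q : ℝ} (hq : -1 < q) (he : -1 < (q + 1) / 2 - dR / 2) :
    (∫ r in Ioi (0:ℝ), ∫ t in Ioi (0:ℝ), r ^ q *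
        ((1 / (2 * π * t) ^ (dR / 2)) * Real.exp (-r ^ 2 / (2 * t)) * Real.exp (-t / 2)))
      = ((2 * π) ^ (-(dR / 2)) * 2 ^ ((q + 1) / 2) * (1 / 2) * Real.Gamma ((q + 1) / 2)) *
        (2 ^ ((q + 1) / 2 - dR / 2 + 1) * Real.Gamma ((q + 1) / 2 - dR / 2 + 1)) := by
  rw [← integral_integral_swap (aux_integrable dR hq he)]
  rw [setIntegral_congr_fun measurableSet_Ioi
    (fun t (ht : t ∈ Ioi (0:ℝ)) => aux_inner dR hq ht)]
  rw [integral_const_mul, aux_touter he]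

end Statement18Aux

theorem statement18 (d : ℕ) (hd : 1 ≤ d) (φ : ℝ) (hφ : 0 ≤ φ) :
    ∫ y : Fin d → ℝ, enormR y ^ φ * massiveG d 1 y =
      (2 : ℝ) ^ (φ + 1) *
        (Real.Gamma ((φ + 2) / 2) * Real.Gamma ((φ + (d : ℝ)) / 2) /
          Real.Gamma ((d : ℝ) / 2)) := by
  classical
  haveI : Nonempty (Fin d) := ⟨⟨0, hd⟩⟩
  have hd1 : (1:ℝ) ≤ (d:ℝ) := by exact_mod_cast hd
  set q : ℝ := (d:ℝ) - 1 + φ with hqdef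
  have hq : -1 < q := by simp only [hqdef]; linarith
  have he : -1 < (q + 1) / 2 - (d:ℝ) / 2 := by simp only [hqdef]; linarith
  set F : ℝ → ℝ := fun s => s ^ φ * ∫ t in Set.Ioi (0:ℝ),
      (1 / (2 * π * t) ^ ((d:ℝ) / 2)) * Real.exp (-s ^ 2 / (2 * t)) * Real.exp (-t / 2)
    with hF
  have h1 : ∀ y : Fin d → ℝ, enormR y ^ φ * massiveG d 1 y = F (enormR y) := by
    intro y
    simp only [massiveG, one_pow, mul_one, hF]
  have hnormeq : ∀ v : EuclideanSpace ℝ (Fin d),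
      enormR ((MeasurableEquiv.toLp 2 (Fin d → ℝ)).symm v) = ‖v‖ := by
    intro v
    rw [EuclideanSpace.norm_eq]
    simp [enormR, Real.norm_eq_abs, sq_abs]
  have h2 : (∫ y : Fin d → ℝ, enormR y ^ φ * massiveG d 1 y)
      = ∫ v : EuclideanSpace ℝ (Fin d), F ‖v‖ := by
    rw [← (EuclideanSpace.volume_preserving_symm_measurableEquiv_toLp (Fin d)).integral_comp
      (MeasurableEquiv.toLp 2 (Fin d → ℝ)).symm.measurableEmbedding
      (fun y => enormR y ^ φ * massiveG d 1 y)]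
    refine integral_congr_ae (Filter.Eventually.of_forall fun v => ?_)
    show enormR _ ^ φ * massiveG d 1 _ = F ‖v‖
    rw [h1, hnormeq]
  haveI : Nontrivial (EuclideanSpace ℝ (Fin d)) := by infer_instance
  have h3 := MeasureTheory.integral_fun_norm_addHaar
    (volume : Measure (EuclideanSpace ℝ (Fin d))) F
  rw [finrank_euclideanSpace_fin] at h3
  rw [h2, h3]
  rw [measureReal_def, EuclideanSpace.volume_ball, Fintype.card_fin]
  have hΓd1 : (0:ℝ) < Real.Gamma ((d:ℝ)/2 + 1) := Real.Gamma_pos_of_pos (by linarith)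
  rw [ENNReal.ofReal_one, one_pow, one_mul, ENNReal.toReal_ofReal (by positivity)]
  rw [nsmul_eq_mul, smul_eq_mul]
  have h4 : (∫ y in Set.Ioi (0:ℝ), y ^ (d-1) • F y)
      = ∫ r in Set.Ioi (0:ℝ), ∫ t in Set.Ioi (0:ℝ), r ^ q *
          ((1 / (2 * π * t) ^ ((d:ℝ) / 2)) * Real.exp (-r ^ 2 / (2 * t)) *
            Real.exp (-t / 2)) := by
    refine setIntegral_congr_fun measurableSet_Ioi fun r hr => ?_
    have hr' : (0:ℝ) < r := hr
    calc r ^ (d-1) • F r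
        = r ^ q * ∫ t in Set.Ioi (0:ℝ), (1 / (2 * π * t) ^ ((d:ℝ)/2)) *
            Real.exp (-r ^ 2 / (2 * t)) * Real.exp (-t / 2) := by
          rw [smul_eq_mul, hF]
          show r ^ (d-1) * (r ^ φ * _) = _
          rw [← mul_assoc]
          congr 1
          rw [← Real.rpow_natCast r (d-1), Nat.cast_sub hd, Nat.cast_one,
            ← Real.rpow_add hr', hqdef]
      _ = _ := (MeasureTheory.integral_const_mul _ _).symm
  rw [h4, aux_iter (d:ℝ) hq he]
  -- arithmetic
  have hπ : (0:ℝ) < π := Real.pi_pos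
  have e1 : (Real.sqrt π) ^ d = π ^ ((d:ℝ)/2) := by
    rw [Real.sqrt_eq_rpow, ← Real.rpow_natCast (π ^ ((1:ℝ)/2)) d, ← Real.rpow_mul hπ.le]
    congr 1
    ring
  have e2 : ((2*π):ℝ) ^ (-((d:ℝ)/2)) = ((2:ℝ) ^ ((d:ℝ)/2))⁻¹ * (π ^ ((d:ℝ)/2))⁻¹ := by
    rw [Real.mul_rpow (by norm_num) hπ.le, ← Real.rpow_neg (by norm_num),
      ← Real.rpow_neg hπ.le]
  have e3 : Real.Gamma ((d:ℝ)/2 + 1) = ((d:ℝ)/2) * Real.Gamma ((d:ℝ)/2) :=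
    Real.Gamma_add_one (by positivity)
  have e4 : (2:ℝ) ^ ((q+1)/2) = (2:ℝ) ^ ((d:ℝ)/2) * (2:ℝ) ^ (φ/2) := by
    rw [← Real.rpow_add two_pos]
    congr 1
    rw [hqdef]; ring
  have e5 : (2:ℝ) ^ ((q+1)/2 - (d:ℝ)/2 + 1) = (2:ℝ) ^ (φ/2) * 2 := by
    rw [show (q+1)/2 - (d:ℝ)/2 + 1 = φ/2 + 1 by rw [hqdef]; ring,
      Real.rpow_add two_pos, Real.rpow_one]
  have e6 : (2:ℝ) ^ (φ + 1) = (2:ℝ) ^ (φ/2) * (2:ℝ) ^ (φ/2) * 2 := by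
    rw [show φ + 1 = φ/2 + (φ/2 + 1) by ring, Real.rpow_add two_pos,
      Real.rpow_add two_pos, Real.rpow_one, mul_assoc]
  have e7 : Real.Gamma ((q+1)/2) = Real.Gamma ((φ + (d:ℝ))/2) := by
    congr 1; rw [hqdef]; ring
  have e8 : Real.Gamma ((q+1)/2 - (d:ℝ)/2 + 1) = Real.Gamma ((φ + 2)/2) := by
    congr 1; rw [hqdef]; ring
  rw [e1, e2, e3, e4, e5, e6, e7, e8]
  have hΓd : (0:ℝ) < Real.Gamma ((d:ℝ)/2) := Real.Gamma_pos_of_pos (by linarith)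
  have hA : ((2:ℝ) ^ ((d:ℝ)/2)) ≠ 0 := by positivity
  have hP : (π ^ ((d:ℝ)/2)) ≠ 0 := by positivity
  have hdne : (d:ℝ) ≠ 0 := by positivity
  field_simp


end OZpaper
end
end
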